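/- arXiv:math-ph/0512015 — 3 statements merged into one kernel-verified Lean document; each statement's English description precedes it below -/
import Mathlib

section
/- Let d ≥ 1 and let F : [0,∞) → ℂ be a C¹ function with ‖F‖_{2d,1} := sup_{Q ≥ 0} ⟨Q⟩^{2d}(|F(Q)| + |F'(Q)|) < ∞. Then there is a constant C > 0, depending only on d, such that for every ξ ∈ ℂ with 0 < Im ξ ≤ 1/2 one has ∫₀^∞ |F'(Q)| / |ξ − Q| dQ ≤ C ‖F‖_{2d,1} · |log(Im ξ)|. -/
/-!
Split the kernel `|ξ - Q|⁻¹` according to the distance of `Q` to `Re ξ`. Far from `Re ξ` the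
kernel is at most `1`, and the decay `|F'(Q)| ≤ CF / (1 + Q²)` integrates to at most `π CF`.
Within distance `1` of `Re ξ` we use `|ξ - Q| ≥ (|Q - Re ξ| + Im ξ) / 2`, and
`∫_{-1}^{1} dt / (|t| + ε) = 2 log ((1 + ε) / ε)`, which is `O(|log ε|)` for `ε ≤ 1/2`.
-/

open MeasureTheory Complex

noncomputable section

/-- Japanese bracket `⟨Q⟩ = √(2 + Q²)`. -/
def jb (x : ℝ) : ℝ := Real.sqrt (2 + x ^ 2)

open Set
open scoped Real

theorem one_add_sq_le_jb_pow {d : ℕ} (hd : 1 ≤ d) (Q : ℝ) : 1 + Q ^ 2 ≤ jb Q ^ (2 * d) := by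
  have hjb : jb Q ^ (2 * d) = (2 + Q ^ 2) ^ d := by
    rw [pow_mul, jb, Real.sq_sqrt (by positivity)]
  rw [hjb]
  calc 1 + Q ^ 2 ≤ 2 + Q ^ 2 := by linarith
    _ ≤ (2 + Q ^ 2) ^ d := le_self_pow₀ (by nlinarith) (by omega)

theorem abs_sub_re_le_norm_sub (ξ : ℂ) (Q : ℝ) : |Q - ξ.re| ≤ ‖ξ - Q‖ := by
  simpa [abs_sub_comm] using Complex.abs_re_le_norm (ξ - Q)

theorem inv_norm_sub_ofReal_le {ξ : ℂ} (hξ : 0 < ξ.im) (Q : ℝ) :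
    ‖ξ - Q‖⁻¹ ≤ 2 * (|Q - ξ.re| + ξ.im)⁻¹ := by
  have hre := abs_sub_re_le_norm_sub ξ Q
  have him : ξ.im ≤ ‖ξ - Q‖ := by
    simpa using (le_abs_self _).trans (Complex.abs_im_le_norm (ξ - Q))
  rw [← div_eq_mul_inv, inv_le_comm₀ (by linarith) (by positivity), inv_div]
  linarith

theorem integral_inv_add_abs_sub {ε : ℝ} (hε : 0 < ε) (x : ℝ) :
    ∫ Q in (x - 1)..(x + 1), (|Q - x| + ε)⁻¹ = 2 * Real.log ((1 + ε) / ε) := by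
  have hcont : Continuous fun t : ℝ => (|t| + ε)⁻¹ :=
    (continuous_abs.add continuous_const).inv₀ fun t => (by positivity : 0 < |t| + ε).ne'
  have hhalf : ∫ t in (0 : ℝ)..1, (|t| + ε)⁻¹ = Real.log ((1 + ε) / ε) := by
    calc ∫ t in (0 : ℝ)..1, (|t| + ε)⁻¹ = ∫ t in (0 : ℝ)..1, (t + ε)⁻¹ :=
          intervalIntegral.integral_congr fun t ht => by
            rw [uIcc_of_le zero_le_one] at ht
            simp only [abs_of_nonneg ht.1]
      _ = Real.log ((1 + ε) / ε) := by
        rw [intervalIntegral.integral_comp_add_right (fun t => t⁻¹), zero_add,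
          integral_inv_of_pos hε (by linarith)]
  have hneg : ∫ t in (-1 : ℝ)..0, (|t| + ε)⁻¹ = ∫ t in (0 : ℝ)..1, (|t| + ε)⁻¹ := by
    simpa using (intervalIntegral.integral_comp_neg (a := 0) (b := 1) fun t => (|t| + ε)⁻¹).symm
  rw [intervalIntegral.integral_comp_sub_right (fun t => (|t| + ε)⁻¹), sub_sub_cancel_left,
    add_sub_cancel_left, ← intervalIntegral.integral_add_adjacent_intervals
      (hcont.intervalIntegrable _ _) (hcont.intervalIntegrable _ _), hneg, hhalf]
  ring

theorem pi_add_four_mul_log_le {ε : ℝ} (hε : 0 < ε) (hε' : ε ≤ 1 / 2) :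
    π + 4 * Real.log ((1 + ε) / ε) ≤ 13 * |Real.log ε| := by
  have hlog2 : Real.log 2 ≤ |Real.log ε| := by
    rw [abs_of_neg (Real.log_neg hε (by linarith)), ← Real.log_inv]
    exact Real.log_le_log two_pos ((le_inv_comm₀ two_pos hε).mpr (by linarith))
  have hlog1 : Real.log (1 + ε) ≤ Real.log 2 := Real.log_le_log (by linarith) (by linarith)
  have hlogε : -Real.log ε ≤ |Real.log ε| := neg_le_abs _
  rw [Real.log_div (by linarith) hε.ne']
  linarith [Real.pi_lt_d2, Real.log_two_gt_d9]

theorem setIntegral_norm_div_norm_sub_le {E : Type*} [NormedAddCommGroup E] {f : ℝ → E}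
    {s : Set ℝ} (hs : MeasurableSet s) {C : ℝ} (hC : 0 ≤ C)
    (hf : ∀ Q ∈ s, ‖f Q‖ ≤ C / (1 + Q ^ 2)) {ξ : ℂ} (hξ : 0 < ξ.im) :
    ∫ Q in s, ‖f Q‖ / ‖ξ - Q‖ ≤ C * (π + 4 * Real.log ((1 + ξ.im) / ξ.im)) := by
  set x := ξ.re
  set ε := ξ.im
  set k : ℝ → ℝ := (Icc (x - 1) (x + 1)).indicator fun Q => (|Q - x| + ε)⁻¹
  set g : ℝ → ℝ := fun Q => C * ((1 + Q ^ 2)⁻¹ + 2 * k Q)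
  have hk0 : ∀ Q, 0 ≤ k Q := indicator_nonneg fun Q _ => by positivity
  have hg0 : ∀ Q, 0 ≤ g Q := fun Q => by have := hk0 Q; positivity
  have hk : Integrable k := by
    refine IntegrableOn.integrable_indicator ?_ measurableSet_Icc
    exact ((continuous_abs.comp (continuous_id.sub continuous_const)).add continuous_const).inv₀
      (fun Q => (by positivity : 0 < |Q - x| + ε).ne') |>.integrableOn_Icc
  have hg : Integrable g := (integrable_inv_one_add_sq.add (hk.const_mul 2)).const_mul C
  have hk_int : ∫ Q, k Q = 2 * Real.log ((1 + ε) / ε) := by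
    rw [integral_indicator measurableSet_Icc, integral_Icc_eq_integral_Ioc,
      ← intervalIntegral.integral_of_le (by linarith), integral_inv_add_abs_sub hξ]
  have hbound : ∀ Q ∈ s, ‖f Q‖ / ‖ξ - Q‖ ≤ g Q := by
    intro Q hQ
    have hfQ := hf Q hQ
    have hgQ : C * (1 + Q ^ 2)⁻¹ ≤ g Q := by have := hk0 Q; simp only [g]; nlinarith
    rcases le_or_gt |Q - x| 1 with hnear | hfar
    · have hfC : ‖f Q‖ ≤ C := hfQ.trans (div_le_self hC (by nlinarith))
      have hQx : Q ∈ Icc (x - 1) (x + 1) := by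
        rw [mem_Icc]; constructor <;> linarith [abs_le.mp hnear]
      have hkQ : k Q = (|Q - x| + ε)⁻¹ := indicator_of_mem hQx _
      calc ‖f Q‖ / ‖ξ - Q‖ ≤ C * (2 * (|Q - x| + ε)⁻¹) := by
            rw [div_eq_mul_inv]
            exact mul_le_mul hfC (inv_norm_sub_ofReal_le hξ Q) (by positivity) hC
        _ ≤ g Q := by
            have := inv_pos.2 (by positivity : (0 : ℝ) < 1 + Q ^ 2)
            rw [← hkQ]; simp only [g]; nlinarith
    · have hdist : 1 ≤ ‖ξ - Q‖ := hfar.le.trans (abs_sub_re_le_norm_sub ξ Q)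
      calc ‖f Q‖ / ‖ξ - Q‖ ≤ ‖f Q‖ := div_le_self (norm_nonneg _) hdist
        _ ≤ g Q := (div_eq_mul_inv C _ ▸ hfQ).trans hgQ
  calc ∫ Q in s, ‖f Q‖ / ‖ξ - Q‖ ≤ ∫ Q in s, g Q :=
        integral_mono_of_nonneg (Filter.Eventually.of_forall fun _ => by positivity) hg.restrict
          (ae_restrict_of_forall_mem hs hbound)
    _ ≤ ∫ Q, g Q := setIntegral_le_integral hg (Filter.Eventually.of_forall hg0)
    _ = C * (π + 4 * Real.log ((1 + ε) / ε)) := by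
        simp only [g]
        rw [integral_const_mul, integral_add integrable_inv_one_add_sq (hk.const_mul 2),
          integral_const_mul, integral_univ_inv_one_add_sq, hk_int]
        ring

theorem statement9 (d : ℕ) (hd : 1 ≤ d) :
    ∃ C > (0 : ℝ),
      ∀ F F' : ℝ → ℂ,
        (∀ Q ∈ Set.Ici (0 : ℝ), HasDerivWithinAt F (F' Q) (Set.Ici 0) Q) →
        ContinuousOn F' (Set.Ici 0) →
        ∀ CF : ℝ,
          (∀ Q : ℝ, 0 ≤ Q →
            jb Q ^ (2 * d) * (‖F Q‖ + ‖F' Q‖) ≤ CF) →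
        ∀ ξ : ℂ, 0 < ξ.im → ξ.im ≤ 1 / 2 →
          (∫ Q in Set.Ioi (0 : ℝ), ‖F' Q‖ / ‖ξ - (Q : ℂ)‖) ≤
            C * CF * |Real.log ξ.im| := by
  refine ⟨13, by norm_num, fun F F' _ _ CF hCF ξ hξ hξ' => ?_⟩
  have hF' : ∀ Q ∈ Ioi (0 : ℝ), ‖F' Q‖ ≤ CF / (1 + Q ^ 2) := fun Q hQ => by
    rw [le_div_iff₀ (by positivity)]
    calc ‖F' Q‖ * (1 + Q ^ 2) ≤ jb Q ^ (2 * d) * (‖F Q‖ + ‖F' Q‖) := by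
          rw [mul_comm]
          exact mul_le_mul (one_add_sq_le_jb_pow hd Q) (le_add_of_nonneg_left (norm_nonneg _))
            (norm_nonneg _) (by unfold jb; positivity)
      _ ≤ CF := hCF Q (le_of_lt hQ)
  have hCF0 : 0 ≤ CF := le_trans (by unfold jb; positivity) (hCF 0 le_rfl)
  calc _ ≤ CF * (π + 4 * Real.log ((1 + ξ.im) / ξ.im)) :=
        setIntegral_norm_div_norm_sub_le measurableSet_Ioi hCF0 hF' hξ
    _ ≤ CF * (13 * |Real.log ξ.im|) := by gcongr; exact pi_add_four_mul_log_le hξ hξ'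
    _ = 13 * CF * |Real.log ξ.im| := by ring
end
end

section
/- Let d ≥ 3. There is a constant C > 0, depending only on d, such that for every measurable h : ℝ^d → ℂ with ‖h‖_{2d,0} < ∞, every s > 0 and every q ∈ ℝ^d one has (2s)^{−1/2} ∫_{{p : |p| = √(2s)}} |h(p − q)| dσ(p) ≤ C ‖h‖_{2d,0} · √s / ( ⟨s⟩ ⟨ |q| − √(2s) ⟩ ), where σ denotes the (d−1)-dimensional surface measure on the sphere of radius √(2s) in ℝ^d. -/
/-!
Write `r = √(2s)` and `T = ⟨‖q‖ - r⟩`. The `(d-1)`-dimensional Hausdorff measure of the part of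
the sphere of radius `r` lying in a ball of radius `t` is `O(t^(d-1))`: near a point of the sphere,
the sphere is the graph of the 2-Lipschitz function `x ↦ √(r² - ‖x‖²)` over the tangent hyperplane,
and globally its measure is `r^(d-1)` times the measure of the unit sphere, which is finite by
compactness. Cutting the sphere into the dyadic shells `2ᵏ T ≤ ⟨‖p - q‖⟩ < 2ᵏ⁺¹ T`, on which
`|h (p - q)| ≤ ‖h‖ (2ᵏ T)^(-d)`, gives `∫ |h (p - q)| dσ ≲ ‖h‖ / T`; for `r ≤ 1` the crude bound
`‖h‖ r^(d-1) / T ≤ ‖h‖ r² / T` (here `d ≥ 3`) is better. Dividing by `r` gives `√s / ⟨s⟩`.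
-/

open MeasureTheory Complex

noncomputable section

open Metric Module
open scoped ENNReal NNReal RealInnerProductSpace

lemma jb_pos (x : ℝ) : 0 < jb x := Real.sqrt_pos.2 (by positivity)

lemma one_le_jb (x : ℝ) : 1 ≤ jb x := Real.one_le_sqrt.2 (by nlinarith [sq_nonneg x])

lemma abs_le_jb (x : ℝ) : |x| ≤ jb x := Real.abs_le_sqrt (by linarith)

lemma jb_le_jb {x y : ℝ} (h : |x| ≤ |y|) : jb x ≤ jb y :=
  Real.sqrt_le_sqrt (by nlinarith [sq_abs x, sq_abs y, abs_nonneg x])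

lemma jb_sub_le_jb_norm_sub {E : Type*} [SeminormedAddCommGroup E] {r : ℝ} {p : E}
    (hp : p ∈ sphere 0 r) (q : E) :
    jb (‖q‖ - r) ≤ jb ‖p - q‖ := by
  rw [mem_sphere_zero_iff_norm] at hp
  rw [← hp, norm_sub_rev]
  exact jb_le_jb (by simpa [abs_norm] using abs_norm_sub_norm_le q p)

lemma exists_two_pow_mul_le_lt {T y : ℝ} (hT : 0 < T) (hTy : T ≤ y) :
    ∃ k : ℕ, 2 ^ k * T ≤ y ∧ y < 2 ^ (k + 1) * T := by
  obtain ⟨k, hk⟩ := exists_nat_pow_near ((one_le_div hT).2 hTy) one_lt_two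
  exact ⟨k, (le_div_iff₀ hT).1 hk.1, (div_lt_iff₀ hT).1 hk.2⟩

lemma ofReal_inv_pow_le_tsum_indicator {X : Type*} [PseudoMetricSpace X] {T y : ℝ} (hT : 0 < T)
    (hTy : T ≤ y) {x q : X} (hxq : dist x q ≤ y) (N : ℕ) :
    ENNReal.ofReal ((y ^ N)⁻¹) ≤ ∑' k : ℕ, (closedBall q (2 ^ (k + 1) * T)).indicator
      (fun _ => ENNReal.ofReal (((2 ^ k * T) ^ N)⁻¹)) x := by
  obtain ⟨k, hky, hyk⟩ := exists_two_pow_mul_le_lt hT hTy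
  refine le_trans ?_ (ENNReal.le_tsum k)
  rw [Set.indicator_of_mem (mem_closedBall.2 (by linarith))]
  exact ENNReal.ofReal_le_ofReal
    (inv_anti₀ (by positivity) (pow_le_pow_left₀ (by positivity) hky N))

lemma tsum_ofReal_mul_half_pow {a : ℝ} (ha : 0 ≤ a) :
    ∑' k : ℕ, ENNReal.ofReal (a * (1 / 2) ^ k) = ENNReal.ofReal (2 * a) := by
  rw [← ENNReal.ofReal_tsum_of_nonneg (fun k => by positivity)
    (summable_geometric_two.mul_left a), tsum_mul_left, tsum_geometric_two, mul_comm]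

lemma abs_sqrt_sub_norm_sq_sub_le {F : Type*} [SeminormedAddCommGroup F] {r : ℝ} {x y : F}
    (hx : ‖x‖ ≤ r / 2) (hy : ‖y‖ ≤ r / 2) :
    |√(r ^ 2 - ‖x‖ ^ 2) - √(r ^ 2 - ‖y‖ ^ 2)| ≤ ‖x - y‖ := by
  set a := √(r ^ 2 - ‖x‖ ^ 2)
  set b := √(r ^ 2 - ‖y‖ ^ 2)
  have hxa : ‖x‖ ≤ a := Real.le_sqrt_of_sq_le (by nlinarith [norm_nonneg x])
  have hyb : ‖y‖ ≤ b := Real.le_sqrt_of_sq_le (by nlinarith [norm_nonneg y])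
  have ha : a ^ 2 = r ^ 2 - ‖x‖ ^ 2 := Real.sq_sqrt (by nlinarith [norm_nonneg x])
  have hb : b ^ 2 = r ^ 2 - ‖y‖ ^ 2 := Real.sq_sqrt (by nlinarith [norm_nonneg y])
  have key : |a - b| * (a + b) ≤ ‖x - y‖ * (a + b) := by
    calc |a - b| * (a + b) = |‖y‖ - ‖x‖| * (‖x‖ + ‖y‖) := by
          rw [← abs_of_nonneg (by positivity : 0 ≤ a + b),
            ← abs_of_nonneg (by positivity : 0 ≤ ‖x‖ + ‖y‖), ← abs_mul, ← abs_mul]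
          congr 1
          linear_combination ha - hb
      _ ≤ ‖x - y‖ * (a + b) := by
          rw [abs_sub_comm]
          exact mul_le_mul (abs_norm_sub_norm_le x y) (by linarith) (by positivity)
            (norm_nonneg _)
  rcases (add_nonneg (hxa.trans' (norm_nonneg x)) (hyb.trans' (norm_nonneg y))).eq_or_lt with
    hab | hab
  · have : |a - b| ≤ a + b := abs_sub_le_iff.2 ⟨by linarith [norm_nonneg y],
      by linarith [norm_nonneg x]⟩
    linarith [norm_nonneg (x - y)]
  · exact le_of_mul_le_mul_right key hab

instance isAddHaarMeasure_hausdorffMeasure_euclideanSpace (n : ℕ) :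
    (μH[n] : Measure (EuclideanSpace ℝ (Fin n))).IsAddHaarMeasure := by
  simpa using isAddHaarMeasure_hausdorffMeasure (E := EuclideanSpace ℝ (Fin n))

lemma hausdorffMeasure_closedBall_euclideanSpace (n : ℕ) {ρ : ℝ} (hρ : 0 ≤ ρ) :
    μH[n] (closedBall (0 : EuclideanSpace ℝ (Fin n)) ρ) =
      ENNReal.ofReal (ρ ^ n) * μH[n] (closedBall (0 : EuclideanSpace ℝ (Fin n)) 1) := by
  rw [Measure.addHaar_closedBall' _ _ hρ, finrank_euclideanSpace_fin]

section NormedSpace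

variable {E : Type*} [NormedAddCommGroup E] [NormedSpace ℝ E] [MeasurableSpace E] [BorelSpace E]
  {n : ℕ}

open scoped Pointwise in
lemma hausdorffMeasure_sphere_eq {r : ℝ} (hr : 0 < r) :
    μH[n] (sphere (0 : E) r) = ENNReal.ofReal (r ^ n) * μH[n] (sphere (0 : E) 1) := by
  have hsphere : sphere (0 : E) r = r • sphere 0 1 := by
    rw [smul_sphere' hr.ne', smul_zero, Real.norm_of_nonneg hr.le, mul_one]
  rw [hsphere, Measure.hausdorffMeasure_smul₀ (Nat.cast_nonneg n) hr.ne', ENNReal.smul_def,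
    smul_eq_mul, NNReal.rpow_natCast, ENNReal.coe_pow, ← enorm_eq_nnnorm,
    Real.enorm_of_nonneg hr.le, ENNReal.ofReal_pow hr.le]

end NormedSpace

section InnerProductSpace

variable {E : Type*} [NormedAddCommGroup E] [InnerProductSpace ℝ E]

lemma dist_add_smul_sq {u x y : E} (hu : ‖u‖ = 1) (hx : ⟪x, u⟫ = 0) (hy : ⟪y, u⟫ = 0)
    (a b : ℝ) : dist (x + a • u) (y + b • u) ^ 2 = dist x y ^ 2 + (a - b) ^ 2 := by
  have horth : ⟪x - y, (a - b) • u⟫ = 0 := by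
    rw [inner_smul_right, inner_sub_left, hx, hy, sub_zero, mul_zero]
  have hpyth := norm_add_sq_eq_norm_sq_add_norm_sq_real horth
  rw [norm_smul, hu, mul_one, Real.norm_eq_abs] at hpyth
  rw [dist_eq_norm, dist_eq_norm, show x + a • u - (y + b • u) = x - y + (a - b) • u by
    rw [sub_smul]; abel, sq, hpyth, sq, abs_mul_abs_self, sq]

section Graph

variable {F : Type*} [NormedAddCommGroup F] [NormedSpace ℝ F] {ψ : F →ₗᵢ[ℝ] E} {u : E}
  {r t : ℝ}

lemma lipschitzOnWith_add_sqrt_sub_norm_sq_smul (hu : ‖u‖ = 1) (hψu : ∀ x, ⟪ψ x, u⟫ = 0)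
    (htr : t ≤ r / 2) :
    LipschitzOnWith 2 (fun x => ψ x + √(r ^ 2 - ‖x‖ ^ 2) • u) (closedBall 0 t) := by
  refine LipschitzOnWith.of_dist_le_mul fun x hx y hy => ?_
  rw [mem_closedBall_zero_iff] at hx hy
  have hf : (√(r ^ 2 - ‖x‖ ^ 2) - √(r ^ 2 - ‖y‖ ^ 2)) ^ 2 ≤ dist x y ^ 2 := by
    rw [← sq_abs, dist_eq_norm]
    exact pow_le_pow_left₀ (abs_nonneg _)
      (abs_sqrt_sub_norm_sq_sub_le (hx.trans htr) (hy.trans htr)) 2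
  have hsq := dist_add_smul_sq hu (hψu x) (hψu y) (√(r ^ 2 - ‖x‖ ^ 2)) (√(r ^ 2 - ‖y‖ ^ 2))
  rw [ψ.isometry.dist_eq] at hsq
  rw [← pow_le_pow_iff_left₀ dist_nonneg (by positivity) two_ne_zero, NNReal.coe_ofNat, hsq]
  nlinarith [sq_nonneg (dist x y)]

lemma sphere_inter_closedBall_subset_image (hu : ‖u‖ = 1)
    (hψ : Set.range ψ = ((ℝ ∙ u)ᗮ : Set E)) (hr : 0 < r) (ht : 0 ≤ t) (htr : t ≤ r) :
    sphere 0 r ∩ closedBall (r • u) t ⊆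
      (fun x => ψ x + √(r ^ 2 - ‖x‖ ^ 2) • u) '' closedBall 0 t := by
  rintro p ⟨hp, hpq⟩
  rw [mem_sphere_zero_iff_norm] at hp
  rw [mem_closedBall_iff_norm] at hpq
  set a := ⟪p, u⟫
  have ha : (r - a) * (2 * r) = ‖p - r • u‖ ^ 2 := by
    rw [norm_sub_sq_real, real_inner_smul_right, norm_smul, hu, hp, Real.norm_of_nonneg hr.le]
    ring
  have hra : 0 ≤ r - a := nonneg_of_mul_nonneg_left (ha ▸ sq_nonneg _) (by positivity)
  have ha0 : 0 ≤ a := by nlinarith [pow_le_pow_left₀ (norm_nonneg _) hpq 2]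
  have hy : p - a • u ∈ (ℝ ∙ u)ᗮ := by
    rw [Submodule.mem_orthogonal_singleton_iff_inner_right, inner_sub_right,
      real_inner_smul_right, real_inner_self_eq_norm_sq, hu, real_inner_comm]
    ring
  rw [← SetLike.mem_coe, ← hψ] at hy
  obtain ⟨x, hx⟩ := hy
  have hxa : ‖x‖ ^ 2 = r ^ 2 - a ^ 2 := by
    rw [← ψ.norm_map, hx, norm_sub_sq_real, real_inner_smul_right, norm_smul, hu, hp,
      Real.norm_of_nonneg ha0]
    ring
  refine ⟨x, ?_, ?_⟩
  · rw [mem_closedBall_zero_iff, ← pow_le_pow_iff_left₀ (norm_nonneg x) ht two_ne_zero, hxa]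
    nlinarith [mul_le_mul_of_nonneg_left (show r + a ≤ 2 * r by linarith) hra,
      pow_le_pow_left₀ (norm_nonneg _) hpq 2]
  · simp only [hx, hxa, sub_sub_cancel, Real.sqrt_sq ha0, sub_add_cancel]

end Graph

variable [FiniteDimensional ℝ E] {n : ℕ}

lemma exists_linearIsometry_range_eq_orthogonal (hE : finrank ℝ E = n + 1) {u : E}
    (hu : u ≠ 0) :
    ∃ ψ : EuclideanSpace ℝ (Fin n) →ₗᵢ[ℝ] E, Set.range ψ = ((ℝ ∙ u)ᗮ : Set E) := by
  have hW : finrank ℝ (ℝ ∙ u)ᗮ = n := by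
    have := Submodule.finrank_add_finrank_orthogonal (ℝ ∙ u)
    rw [finrank_span_singleton hu, hE] at this
    omega
  let e := ((stdOrthonormalBasis ℝ (ℝ ∙ u)ᗮ).reindex (finCongr hW)).repr
  refine ⟨(ℝ ∙ u)ᗮ.subtypeₗᵢ.comp e.symm.toLinearIsometry, ?_⟩
  ext y
  constructor
  · rintro ⟨x, rfl⟩
    exact (e.symm x).2
  · intro hy
    exact ⟨e ⟨y, hy⟩, by simp⟩

variable [MeasurableSpace E] [BorelSpace E]

theorem hausdorffMeasure_sphere_inter_closedBall_le_of_norm_eq (hE : finrank ℝ E = n + 1)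
    {r t : ℝ} (hr : 0 < r) (ht : 0 ≤ t) (htr : t ≤ r / 2) {q : E} (hq : ‖q‖ = r) :
    μH[n] (sphere 0 r ∩ closedBall q t) ≤
      ENNReal.ofReal ((2 * t) ^ n) * μH[n] (closedBall (0 : EuclideanSpace ℝ (Fin n)) 1) := by
  set u := r⁻¹ • q
  have hu : ‖u‖ = 1 := by
    rw [norm_smul, norm_inv, hq, Real.norm_of_nonneg hr.le, inv_mul_cancel₀ hr.ne']
  have hqu : q = r • u := (smul_inv_smul₀ hr.ne' q).symm
  obtain ⟨ψ, hψ⟩ :=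
    exists_linearIsometry_range_eq_orthogonal hE (norm_ne_zero_iff.1 (hu ▸ one_ne_zero))
  have hψu : ∀ x, ⟪ψ x, u⟫ = 0 := fun x => by
    rw [real_inner_comm, ← Submodule.mem_orthogonal_singleton_iff_inner_right, ← SetLike.mem_coe,
      ← hψ]
    exact ⟨x, rfl⟩
  calc μH[n] (sphere 0 r ∩ closedBall q t)
      ≤ μH[n] ((fun x => ψ x + √(r ^ 2 - ‖x‖ ^ 2) • u) '' closedBall 0 t) :=
        measure_mono (hqu ▸ sphere_inter_closedBall_subset_image hu hψ hr ht (by linarith))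
    _ ≤ (2 : ℝ≥0∞) ^ (n : ℝ) * μH[n] (closedBall (0 : EuclideanSpace ℝ (Fin n)) t) := by
      simpa using (lipschitzOnWith_add_sqrt_sub_norm_sq_smul hu hψu htr).hausdorffMeasure_image_le
        (Nat.cast_nonneg n)
    _ = ENNReal.ofReal ((2 * t) ^ n) * μH[n] (closedBall (0 : EuclideanSpace ℝ (Fin n)) 1) := by
      rw [hausdorffMeasure_closedBall_euclideanSpace n ht, ENNReal.rpow_natCast, ← mul_assoc,
        mul_pow, ENNReal.ofReal_mul (by positivity), ENNReal.ofReal_pow zero_le_two]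
      norm_num

lemma hausdorffMeasure_unitSphere_lt_top (hE : finrank ℝ E = n + 1) :
    μH[n] (sphere (0 : E) 1) < ⊤ := by
  obtain ⟨s, hsS, hs, hcover⟩ := finite_cover_balls_of_compact (isCompact_sphere (0 : E) 1)
    one_half_pos
  have hball : μH[n] (closedBall (0 : EuclideanSpace ℝ (Fin n)) 1) < ⊤ :=
    (isCompact_closedBall _ _).measure_lt_top
  refine (measure_mono fun p hp => ?_).trans_lt
    (measure_biUnion_lt_top (μ := μH[n]) (f := fun q => sphere (0 : E) 1 ∩ closedBall q (1 / 2))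
      hs fun q hq => ?_)
  · obtain ⟨q, hq, hpq⟩ := Set.mem_iUnion₂.1 (hcover hp)
    exact Set.mem_iUnion₂.2 ⟨q, hq, hp, ball_subset_closedBall hpq⟩
  · refine (hausdorffMeasure_sphere_inter_closedBall_le_of_norm_eq hE one_pos one_half_pos.le
      (by norm_num) (mem_sphere_zero_iff_norm.1 (hsS hq))).trans_lt ?_
    exact ENNReal.mul_lt_top ENNReal.ofReal_lt_top hball

variable (E n) in
def sphereBallConst : ℝ≥0∞ :=
  μH[n] (closedBall (0 : EuclideanSpace ℝ (Fin n)) 1) + μH[n] (sphere (0 : E) 1)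

lemma sphereBallConst_ne_top (hE : finrank ℝ E = n + 1) : sphereBallConst E n ≠ ⊤ :=
  ENNReal.add_ne_top.2 ⟨(isCompact_closedBall _ _).measure_lt_top.ne,
    (hausdorffMeasure_unitSphere_lt_top hE).ne⟩

lemma sphereBallConst_toReal_pos (hE : finrank ℝ E = n + 1) : 0 < (sphereBallConst E n).toReal :=
  ENNReal.toReal_pos ((measure_closedBall_pos _ _ one_pos).trans_le le_self_add).ne'
    (sphereBallConst_ne_top hE)

theorem hausdorffMeasure_sphere_inter_closedBall_le (hE : finrank ℝ E = n + 1) {r t : ℝ}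
    (hr : 0 < r) (ht : 0 ≤ t) (q : E) :
    μH[n] (sphere 0 r ∩ closedBall q t) ≤ ENNReal.ofReal ((4 * t) ^ n) * sphereBallConst E n := by
  rcases (sphere (0 : E) r ∩ closedBall q t).eq_empty_or_nonempty with hempty | ⟨p, hp, hpq⟩
  · simp [hempty]
  have hsub : sphere (0 : E) r ∩ closedBall q t ⊆ sphere 0 r ∩ closedBall p (2 * t) :=
    fun x ⟨hx, hxq⟩ => ⟨hx, by
      rw [mem_closedBall] at hxq hpq ⊢
      linarith [dist_triangle_right x p q]⟩
  refine (measure_mono hsub).trans ?_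
  by_cases htr : 2 * t ≤ r / 2
  · calc _ ≤ ENNReal.ofReal ((2 * (2 * t)) ^ n) *
            μH[n] (closedBall (0 : EuclideanSpace ℝ (Fin n)) 1) :=
          hausdorffMeasure_sphere_inter_closedBall_le_of_norm_eq hE hr (by positivity) htr
            (mem_sphere_zero_iff_norm.1 hp)
      _ ≤ _ := by
          rw [show 2 * (2 * t) = 4 * t by ring]
          exact mul_le_mul' le_rfl le_self_add
  · calc _ ≤ μH[n] (sphere (0 : E) r) := measure_mono Set.inter_subset_left
      _ = ENNReal.ofReal (r ^ n) * μH[n] (sphere (0 : E) 1) := hausdorffMeasure_sphere_eq hr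
      _ ≤ _ := mul_le_mul' (ENNReal.ofReal_le_ofReal (pow_le_pow_left₀ hr.le (by linarith) n))
          le_add_self

theorem lintegral_sphere_inv_jb_pow_le (hE : finrank ℝ E = n + 1) {r : ℝ} (hr : 0 < r) (q : E) :
    ∫⁻ p in sphere 0 r, ENNReal.ofReal ((jb ‖p - q‖ ^ (n + 1))⁻¹) ∂μH[n] ≤
      ENNReal.ofReal (2 * 8 ^ n / jb (‖q‖ - r)) * sphereBallConst E n := by
  set T := jb (‖q‖ - r)
  have hT : 0 < T := jb_pos _
  set c : ℕ → ℝ := fun k => ((2 ^ k * T) ^ (n + 1))⁻¹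
  set B : ℕ → Set E := fun k => closedBall q (2 ^ (k + 1) * T)
  have hterm : ∀ k, c k * (4 * (2 ^ (k + 1) * T)) ^ n = 8 ^ n / T * (1 / 2) ^ k := fun k => by
    simp only [c, one_div, inv_pow]
    field_simp
    ring
  calc ∫⁻ p in sphere 0 r, ENNReal.ofReal ((jb ‖p - q‖ ^ (n + 1))⁻¹) ∂μH[n]
      ≤ ∫⁻ p in sphere 0 r, ∑' k, (B k).indicator (fun _ => ENNReal.ofReal (c k)) p ∂μH[n] :=
        setLIntegral_mono' isClosed_sphere.measurableSet fun p hp =>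
          ofReal_inv_pow_le_tsum_indicator hT (jb_sub_le_jb_norm_sub hp q)
            ((le_abs_self _).trans (dist_eq_norm p q ▸ abs_le_jb _)) _
    _ = ∑' k, ENNReal.ofReal (c k) * μH[n] (sphere 0 r ∩ B k) := by
        rw [lintegral_tsum fun k =>
          (measurable_const.indicator measurableSet_closedBall).aemeasurable]
        congr 1 with k
        rw [lintegral_indicator_const measurableSet_closedBall, Measure.restrict_apply
          measurableSet_closedBall, Set.inter_comm]
    _ ≤ ∑' k, ENNReal.ofReal (8 ^ n / T * (1 / 2) ^ k) * sphereBallConst E n := by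
        refine ENNReal.tsum_le_tsum fun k => ?_
        rw [← hterm, ENNReal.ofReal_mul (by positivity), mul_assoc]
        exact mul_le_mul' le_rfl
          (hausdorffMeasure_sphere_inter_closedBall_le hE hr (by positivity) q)
    _ = ENNReal.ofReal (2 * 8 ^ n / T) * sphereBallConst E n := by
        rw [ENNReal.tsum_mul_right, tsum_ofReal_mul_half_pow (by positivity), mul_div_assoc]

theorem lintegral_sphere_inv_jb_pow_le_min (hE : finrank ℝ E = n + 1) (hn : 2 ≤ n) {r : ℝ}
    (hr : 0 < r) (q : E) :
    ∫⁻ p in sphere 0 r, ENNReal.ofReal ((jb ‖p - q‖ ^ (n + 1))⁻¹) ∂μH[n] ≤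
      ENNReal.ofReal (2 * 8 ^ n * min 1 r ^ 2 / jb (‖q‖ - r)) * sphereBallConst E n := by
  rcases le_total 1 r with h1r | hr1
  · rw [min_eq_left h1r, one_pow, mul_one]
    exact lintegral_sphere_inv_jb_pow_le hE hr q
  set T := jb (‖q‖ - r)
  have hT : 0 < T := jb_pos _
  calc ∫⁻ p in sphere 0 r, ENNReal.ofReal ((jb ‖p - q‖ ^ (n + 1))⁻¹) ∂μH[n]
      ≤ ∫⁻ _ in sphere 0 r, ENNReal.ofReal T⁻¹ ∂μH[n] :=
        setLIntegral_mono' isClosed_sphere.measurableSet fun p hp =>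
          ENNReal.ofReal_le_ofReal (inv_anti₀ hT ((jb_sub_le_jb_norm_sub hp q).trans
            (le_self_pow₀ (one_le_jb _) n.succ_ne_zero)))
    _ = ENNReal.ofReal (T⁻¹ * r ^ n) * μH[n] (sphere (0 : E) 1) := by
        rw [setLIntegral_const, hausdorffMeasure_sphere_eq hr, ← mul_assoc,
          ENNReal.ofReal_mul (inv_nonneg.2 hT.le)]
    _ ≤ _ := by
        refine mul_le_mul' (ENNReal.ofReal_le_ofReal ?_) le_add_self
        rw [min_eq_right hr1, inv_mul_eq_div]
        gcongr
        calc r ^ n ≤ r ^ 2 := pow_le_pow_of_le_one hr.le hr1 hn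
          _ ≤ 2 * 8 ^ n * r ^ 2 := le_mul_of_one_le_left (by positivity)
              (one_le_mul_of_one_le_of_one_le one_le_two (one_le_pow₀ (by norm_num)))

theorem integral_norm_sphere_le (hE : finrank ℝ E = n + 1) (hn : 2 ≤ n) {F : Type*}
    [NormedAddCommGroup F] {N : ℕ} (hN : n + 1 ≤ N) {h : E → F} {Ch : ℝ}
    (hCh : ∀ x, jb ‖x‖ ^ N * ‖h x‖ ≤ Ch) {r : ℝ} (hr : 0 < r) (q : E) :
    ∫ p in sphere 0 r, ‖h (p - q)‖ ∂μH[n] ≤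
      2 * 8 ^ n * (sphereBallConst E n).toReal * Ch * min 1 r ^ 2 / jb (‖q‖ - r) := by
  have hCh0 : 0 ≤ Ch := (mul_nonneg (pow_nonneg (jb_pos _).le _) (norm_nonneg _)).trans (hCh 0)
  have hpt : ∀ x, ‖h x‖ ≤ Ch * (jb ‖x‖ ^ (n + 1))⁻¹ := fun x => by
    have hjb : 0 < jb ‖x‖ ^ (n + 1) := pow_pos (jb_pos _) _
    rw [← div_eq_mul_inv, le_div_iff₀ hjb]
    exact (mul_le_mul_of_nonneg_left (pow_le_pow_right₀ (one_le_jb _) hN) (norm_nonneg _)).trans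
      (mul_comm (jb ‖x‖ ^ N) _ ▸ hCh x)
  have hK := sphereBallConst_ne_top (E := E) hE
  have hT := jb_pos (‖q‖ - r)
  refine (Real.le_norm_self _).trans ((norm_integral_le_lintegral_norm _).trans
    (ENNReal.toReal_le_of_le_ofReal (by positivity) ?_))
  calc ∫⁻ p in sphere 0 r, ENNReal.ofReal ‖‖h (p - q)‖‖ ∂μH[n]
      ≤ ∫⁻ p in sphere 0 r, ENNReal.ofReal Ch * ENNReal.ofReal ((jb ‖p - q‖ ^ (n + 1))⁻¹) ∂μH[n] :=
        lintegral_mono fun p => by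
          rw [norm_norm, ← ENNReal.ofReal_mul hCh0]
          exact ENNReal.ofReal_le_ofReal (hpt _)
    _ ≤ ENNReal.ofReal Ch * (ENNReal.ofReal (2 * 8 ^ n * min 1 r ^ 2 / jb (‖q‖ - r)) *
          ENNReal.ofReal (sphereBallConst E n).toReal) := by
        rw [lintegral_const_mul' _ _ ENNReal.ofReal_ne_top, ENNReal.ofReal_toReal hK]
        exact mul_le_mul' le_rfl (lintegral_sphere_inv_jb_pow_le_min hE hn hr q)
    _ = _ := by
        rw [← ENNReal.ofReal_mul (by positivity), ← ENNReal.ofReal_mul hCh0]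
        congr 1
        ring

end InnerProductSpace

lemma inv_sqrt_mul_min_sq_le {s : ℝ} (hs : 0 < s) :
    (√(2 * s))⁻¹ * min 1 √(2 * s) ^ 2 ≤ 3 * √s / jb s := by
  set r := √(2 * s)
  have hr : 0 < r := Real.sqrt_pos.2 (by positivity)
  have hr2 : r ^ 2 = 2 * s := Real.sq_sqrt (by positivity)
  have hsr : √s * r = √2 * s := by
    rw [← Real.sqrt_mul hs.le, show s * (2 * s) = 2 * s ^ 2 by ring, Real.sqrt_mul zero_le_two,
      Real.sqrt_sq hs.le]
  have hsqrt2 : 1 ≤ √2 := Real.one_le_sqrt.2 one_le_two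
  have key : min 1 r ^ 2 * jb s ≤ 3 * (√s * r) := by
    rw [hsr]
    rcases le_total r 1 with hr1 | h1r
    · have hs2 : s ≤ 1 / 2 := by nlinarith
      have hjb : jb s ≤ 3 / 2 := Real.sqrt_le_iff.2 ⟨by norm_num, by nlinarith⟩
      rw [min_eq_right hr1, hr2]
      nlinarith
    · have hs2 : 1 / 2 ≤ s := by nlinarith
      have hjb : jb s ≤ 3 * s := Real.sqrt_le_iff.2 ⟨by positivity, by nlinarith⟩
      rw [min_eq_left h1r, one_pow, one_mul]
      nlinarith
  calc r⁻¹ * min 1 r ^ 2 = min 1 r ^ 2 * jb s / (r * jb s) := by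
        field_simp [(jb_pos s).ne']
    _ ≤ 3 * (√s * r) / (r * jb s) := div_le_div_of_nonneg_right key (by positivity [jb_pos s])
    _ = 3 * √s / jb s := by field_simp [(jb_pos s).ne']

theorem statement11 (d : ℕ) (hd : 3 ≤ d) :
    ∃ C > (0 : ℝ),
      ∀ h : EuclideanSpace ℝ (Fin d) → ℂ, Measurable h →
      ∀ Ch : ℝ, (∀ x, jb ‖x‖ ^ (2 * d) * ‖h x‖ ≤ Ch) →
      ∀ s : ℝ, 0 < s → ∀ q : EuclideanSpace ℝ (Fin d),
        (2 * s) ^ (-(1 / 2) : ℝ) *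
            ∫ p in Metric.sphere (0 : EuclideanSpace ℝ (Fin d)) (Real.sqrt (2 * s)),
              ‖h (p - q)‖ ∂(μH[(d : ℝ) - 1]) ≤
          C * Ch * Real.sqrt s / (jb s * jb (‖q‖ - Real.sqrt (2 * s))) := by
  obtain ⟨n, rfl⟩ : ∃ n, d = n + 1 := ⟨d - 1, by omega⟩
  have hE : finrank ℝ (EuclideanSpace ℝ (Fin (n + 1))) = n + 1 := finrank_euclideanSpace_fin
  set A := 2 * 8 ^ n * (sphereBallConst (EuclideanSpace ℝ (Fin (n + 1))) n).toReal
  have hA : 0 < A := mul_pos (by positivity) (sphereBallConst_toReal_pos hE)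
  refine ⟨3 * A, by positivity, fun h _ Ch hCh s hs q => ?_⟩
  set r := √(2 * s)
  have hr : 0 < r := Real.sqrt_pos.2 (by positivity)
  have hCh0 : 0 ≤ Ch := (mul_nonneg (pow_nonneg (jb_pos _).le _) (norm_nonneg _)).trans (hCh 0)
  have hI := integral_norm_sphere_le hE (by omega) (by omega) hCh hr q
  rw [show ((n + 1 : ℕ) : ℝ) - 1 = n by push_cast; ring, Real.rpow_neg (by positivity),
    ← Real.sqrt_eq_rpow]
  calc r⁻¹ * ∫ p in sphere 0 r, ‖h (p - q)‖ ∂μH[n]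
      ≤ r⁻¹ * (A * Ch * min 1 r ^ 2 / jb (‖q‖ - r)) := mul_le_mul_of_nonneg_left hI (by positivity)
    _ = A * Ch / jb (‖q‖ - r) * (r⁻¹ * min 1 r ^ 2) := by ring
    _ ≤ A * Ch / jb (‖q‖ - r) * (3 * √s / jb s) :=
        mul_le_mul_of_nonneg_left (inv_sqrt_mul_min_sq_le hs) (by positivity [jb_pos (‖q‖ - r)])
    _ = 3 * A * Ch * √s / (jb s * jb (‖q‖ - r)) := by ring
end
end

section
/- For every K ≥ 1 and every infinite sequence γ̃ = (γ̃₁, γ̃₂, …) with entries in L ∪ {ϑ}, there exist k ≤ K and n with k ≤ n ≤ k+4 such that the truncation γ̃_{[1,n]} belongs to Γ̃(n,K) and k = k(γ̃_{[1,n]}). Moreover, for each fixed n and K the constituent sets of the union Γ̃(n,K), namely Γ̃_{n,K}^{(0),nr}, Γ̃_{n,K}^{(1),nr}, and for each 0 ≤ k ≤ K the sets Γ̃_{n,k}^{(1),tri}, Γ̃_{n,k}^{(0),rec}, Γ̃_{n,k}^{(1),rec}, Γ̃_{n,k}^{(1),nest}, Γ̃_{n,k}^{(2),last}, are pairwise disjoint;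 in particular, for the smallest such n the truncation γ̃_{[1,n]} belongs to exactly one of these sets. -/
noncomputable section

open scoped Classical

variable {L : Type*}

/-- The set of (0-based) skeleton indices of the first `n` entries of `γ`,
where `none` plays the role of the counterterm symbol `ϑ`.  This is the
recursive definition of `S(γ̃)`:  a `ϑ` entry leaves the skeleton unchanged;
a potential entry equal to the previous entry, whose index is currently a
skeleton index, removes that index (forming a gate); otherwise the new index
is added to the skeleton. -/
def skel (γ : ℕ → Option L) : ℕ → Finset ℕ
  | 0 => ∅
  | n + 1 =>
    if γ n = none then skel γ n
    else if n - 1 ∈ skel γ n ∧ γ n = γ (n - 1) ∧ 1 ≤ n then (skel γ n).erase (n - 1)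
    else insert n (skel γ n)

/-- `k(γ̃)`: the number of skeleton indices. -/
def kc (γ : ℕ → Option L) (n : ℕ) : ℕ := (skel γ n).card

/-- `t(γ̃)`: the number of `ϑ`-indices. -/
def tc (γ : ℕ → Option L) (n : ℕ) : ℕ :=
  ((Finset.range n).filter fun j => γ j = none).card

/-- `r(γ̃) = t(γ̃) + (n − k(γ̃) − t(γ̃))/2`: the total `λ²`-power carried by
non-skeleton indices. -/
def rc (γ : ℕ → Option L) (n : ℕ) : ℕ :=
  tc γ n + (n - kc γ n - tc γ n) / 2

/-- Non-repetitive sequences: any two coinciding non-`ϑ` entries are adjacent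
and neither is a skeleton index. -/
def isNR (γ : ℕ → Option L) (n : ℕ) : Prop :=
  ∀ j < n, ∀ j' < n, j ≠ j' → γ j = γ j' → γ j ≠ none →
    (j' = j + 1 ∨ j = j' + 1) ∧ j ∉ skel γ n ∧ j' ∉ skel γ n

/-- Membership in `Γ̃*_n`: the length-`n` sequence is repetitive (i.e. not in
`Γ̃_n^{nr} = ⋃_{k≤n,r≤2} Γ̃_{n,k}^{(r),nr}`), but its truncation of length `n−1`
is non-repetitive. -/
def Gstar (γ : ℕ → Option L) (n : ℕ) : Prop :=
  ¬(isNR γ n ∧ rc γ n ≤ 2) ∧ (isNR γ (n - 1) ∧ rc γ (n - 1) ≤ 2)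

/-- `γ̃_{[1,n]} ∈ Γ̃_{n,k}^{(r),nr}`. -/
def memNR (γ : ℕ → Option L) (n k r : ℕ) : Prop :=
  isNR γ n ∧ kc γ n = k ∧ rc γ n = r

/-- `γ̃_{[1,n]} ∈ Γ̃_{n,k}^{(r),last}`: non-repetitive with non-skeleton last entry. -/
def memLast (γ : ℕ → Option L) (n k r : ℕ) : Prop :=
  memNR γ n k r ∧ 1 ≤ n ∧ n - 1 ∉ skel γ n

/-- The last entry triples with a gate: `∃ j ≤ n−2` (1-based) with `j, j+1`
non-skeleton and `γ̃_n = γ̃_j = γ̃_{j+1}` (all indices here 0-based). -/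
def triCond (γ : ℕ → Option L) (n : ℕ) : Prop :=
  ∃ j : ℕ, j + 3 ≤ n ∧ j ∉ skel γ n ∧ j + 1 ∉ skel γ n ∧
    γ (n - 1) = γ j ∧ γ j = γ (j + 1)

/-- `γ̃_{[1,n]} ∈ Γ̃_{n,k}^{(r),tri}`. -/
def memTri (γ : ℕ → Option L) (n k r : ℕ) : Prop :=
  Gstar γ n ∧ kc γ n = k ∧ rc γ n = r ∧ (n - 1) ∈ skel γ n ∧ triCond γ n

/-- The recollision condition: a skeleton index `j ≤ n−2` (1-based) with
`γ̃_j = γ̃_n` and a skeleton index strictly between them. -/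
def recCond (γ : ℕ → Option L) (n : ℕ) : Prop :=
  ∃ j ∈ skel γ n, j + 3 ≤ n ∧ γ j = γ (n - 1) ∧
    ∃ i ∈ skel γ n, j < i ∧ i + 1 < n

/-- `γ̃_{[1,n]} ∈ Γ̃_{n,k}^{(r),rec}`. -/
def memRec (γ : ℕ → Option L) (n k r : ℕ) : Prop :=
  Gstar γ n ∧ kc γ n = k ∧ rc γ n = r ∧ ¬((n - 1) ∈ skel γ n ∧ triCond γ n) ∧
    recCond γ n

/-- `γ̃_{[1,n]} ∈ Γ̃_{n,k}^{(r),nest}`. -/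
def memNest (γ : ℕ → Option L) (n k r : ℕ) : Prop :=
  Gstar γ n ∧ kc γ n = k ∧ rc γ n = r ∧ ¬((n - 1) ∈ skel γ n ∧ triCond γ n) ∧
    ¬recCond γ n ∧ ∃ j ∈ skel γ n, j + 3 ≤ n ∧ γ j = γ (n - 1)

/-- Tags for the constituent sets of the stopping-rule union `Γ̃(n,K)`. -/
inductive StopTag where
  | nr0 : StopTag                -- Γ̃_{n,K}^{(0),nr}
  | nr1 : StopTag                -- Γ̃_{n,K}^{(1),nr}
  | tri (k : ℕ) : StopTag        -- Γ̃_{n,k}^{(1),tri}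
  | rec0 (k : ℕ) : StopTag       -- Γ̃_{n,k}^{(0),rec}
  | rec1 (k : ℕ) : StopTag       -- Γ̃_{n,k}^{(1),rec}
  | nest (k : ℕ) : StopTag       -- Γ̃_{n,k}^{(1),nest}
  | last (k : ℕ) : StopTag       -- Γ̃_{n,k}^{(2),last}

/-- Membership of the length-`n` truncation of `γ` in the constituent set of
`Γ̃(n,K)` labelled by the tag. -/
def memTag (γ : ℕ → Option L) (n K : ℕ) : StopTag → Prop
  | .nr0 => memNR γ n K 0
  | .nr1 => memNR γ n K 1
  | .tri k => k ≤ K ∧ memTri γ n k 1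
  | .rec0 k => k ≤ K ∧ memRec γ n k 0
  | .rec1 k => k ≤ K ∧ memRec γ n k 1
  | .nest k => k ≤ K ∧ memNest γ n k 1
  | .last k => k ≤ K ∧ memLast γ n k 2

/-!
Scan the truncations by increasing length while they are non-repetitive with `r ≤ 1` and
`k < K`. A step either adds the new index to the skeleton (`k` grows by one, `r` is unchanged)
or not (`r` grows by one, `k` does not grow), and `k + 2r = n + t ≥ n`, so the scan stops
within `K + 2` steps with `k ≤ K`, `r ≤ 2`, hence `n ≤ k + 4`. If the last index is not a
skeleton index, the truncation is a `last` sequence; if it is and the truncation is still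
non-repetitive, then `k = K`; otherwise the new label repeats an earlier one. A non-skeleton
index that is not `ϑ` always lies in a gate (two equal adjacent non-skeleton entries), so an
earlier non-skeleton occurrence is a triple collision, and an earlier skeleton occurrence is a
recollision or a nesting according to whether a skeleton index lies in between.

The constituent sets are disjoint because the tag of a member of `Γ̃(n,K)` is determined by the
truncation alone.
-/

section Skeleton

variable (γ : ℕ → Option L)

lemma skel_subset_range : ∀ n, skel γ n ⊆ Finset.range n
  | 0 => by simp [skel]
  | n + 1 => by
    have ih := (skel_subset_range n).trans (Finset.range_subset_range.2 n.le_succ)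
    rw [skel]
    split_ifs
    · exact ih
    · exact (Finset.erase_subset _ _).trans ih
    · exact Finset.insert_subset (Finset.self_mem_range_succ n) ih

lemma self_notMem_skel (n : ℕ) : n ∉ skel γ n := fun h => by
  simpa using skel_subset_range γ n h

lemma ne_none_of_mem_skel : ∀ {n j : ℕ}, j ∈ skel γ n → γ j ≠ none
  | 0, _, h => by simp [skel] at h
  | n + 1, j, h => by
    rw [skel] at h
    split_ifs at h with h0
    · exact ne_none_of_mem_skel h
    · exact ne_none_of_mem_skel (Finset.mem_of_mem_erase h)
    · rcases Finset.mem_insert.1 h with rfl | h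
      · exact h0
      · exact ne_none_of_mem_skel h

lemma skel_succ_subset (n : ℕ) : skel γ (n + 1) ⊆ insert n (skel γ n) := by
  rw [skel]
  split_ifs
  · exact Finset.subset_insert _ _
  · exact (Finset.erase_subset _ _).trans (Finset.subset_insert _ _)
  · exact subset_rfl

lemma notMem_skel_succ {n i : ℕ} (hi : i ≠ n) (h : i ∉ skel γ n) : i ∉ skel γ (n + 1) :=
  fun h' => (Finset.mem_insert.1 (skel_succ_subset γ n h')).elim hi h

lemma skel_succ_of_mem {n : ℕ} (h : n ∈ skel γ (n + 1)) :
    skel γ (n + 1) = insert n (skel γ n) := by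
  rw [skel] at h ⊢
  split_ifs at h ⊢
  · exact absurd h (self_notMem_skel γ n)
  · exact absurd (Finset.mem_of_mem_erase h) (self_notMem_skel γ n)
  · rfl

lemma tc_succ (n : ℕ) : tc γ (n + 1) = tc γ n + if γ n = none then 1 else 0 := by
  unfold tc
  rw [Finset.range_add_one, Finset.filter_insert]
  split_ifs
  · rw [Finset.card_insert_of_notMem (by simp)]
  · rfl

lemma kc_succ_of_mem {n : ℕ} (h : n ∈ skel γ (n + 1)) : kc γ (n + 1) = kc γ n + 1 := by
  rw [kc, kc, skel_succ_of_mem γ h, Finset.card_insert_of_notMem (self_notMem_skel γ n)]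

lemma kc_succ_le_of_notMem {n : ℕ} (h : n ∉ skel γ (n + 1)) : kc γ (n + 1) ≤ kc γ n :=
  Finset.card_le_card fun x hx =>
    (Finset.mem_insert.1 (skel_succ_subset γ n hx)).resolve_left (by rintro rfl; exact h hx)

lemma kc_le (n : ℕ) : kc γ n ≤ n := by
  simpa [kc] using Finset.card_le_card (skel_subset_range γ n)

/-- Non-`ϑ` indices leave the skeleton only in pairs, so `n - k - t` is even. -/
lemma kc_add_two_mul_rc (n : ℕ) : kc γ n + 2 * rc γ n = n + tc γ n := by
  suffices ∃ m, n = kc γ n + tc γ n + 2 * m by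
    obtain ⟨m, hm⟩ := this
    unfold rc
    omega
  induction n with
  | zero => exact ⟨0, by simp [kc, tc, skel]⟩
  | succ n ih =>
    obtain ⟨m, hm⟩ := ih
    rw [kc, tc_succ, skel]
    rw [kc] at hm
    split_ifs with h0 hg
    · exact ⟨m, by omega⟩
    · have := Finset.card_pos.2 ⟨_, hg.1⟩
      rw [Finset.card_erase_of_mem hg.1]
      exact ⟨m + 1, by omega⟩
    · rw [Finset.card_insert_of_notMem (self_notMem_skel γ n)]
      exact ⟨m, by omega⟩

lemma le_kc_add_two_mul_rc (n : ℕ) : n ≤ kc γ n + 2 * rc γ n := by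
  have := kc_add_two_mul_rc γ n
  omega

lemma rc_succ_of_mem {n : ℕ} (h : n ∈ skel γ (n + 1)) : rc γ (n + 1) = rc γ n := by
  have := kc_add_two_mul_rc γ n
  have := kc_add_two_mul_rc γ (n + 1)
  have := kc_succ_of_mem γ h
  have := tc_succ γ n
  rw [if_neg (ne_none_of_mem_skel γ h)] at this
  omega

lemma rc_succ_of_notMem {n : ℕ} (h : n ∉ skel γ (n + 1)) : rc γ (n + 1) = rc γ n + 1 := by
  have := kc_add_two_mul_rc γ n
  have := kc_add_two_mul_rc γ (n + 1)
  have htc := tc_succ γ n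
  unfold kc at *
  by_cases h0 : γ n = none
  · rw [skel, if_pos h0] at *
    omega
  · have hg : n - 1 ∈ skel γ n ∧ γ n = γ (n - 1) ∧ 1 ≤ n := by
      by_contra hg
      rw [skel, if_neg h0, if_neg hg] at h
      exact h (Finset.mem_insert_self _ _)
    have := Finset.card_pos.2 ⟨_, hg.1⟩
    rw [skel, if_neg h0, if_pos hg, Finset.card_erase_of_mem hg.1] at *
    omega

lemma kc_succ_le (n : ℕ) : kc γ (n + 1) ≤ kc γ n + 1 := by
  by_cases h : n ∈ skel γ (n + 1)
  · exact (kc_succ_of_mem γ h).le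
  · exact (kc_succ_le_of_notMem γ h).trans (Nat.le_succ _)

lemma rc_succ_le (n : ℕ) : rc γ (n + 1) ≤ rc γ n + 1 := by
  by_cases h : n ∈ skel γ (n + 1)
  · exact (rc_succ_of_mem γ h).trans_le (Nat.le_succ _)
  · exact (rc_succ_of_notMem γ h).le

lemma one_le_rc_of_notMem_skel : ∀ {n j : ℕ}, j < n → j ∉ skel γ n → 1 ≤ rc γ n
  | 0, _, hj, _ => absurd hj (Nat.not_lt_zero _)
  | n + 1, j, hj, hs => by
    by_cases hn : n ∈ skel γ (n + 1)
    · rw [skel_succ_of_mem γ hn, Finset.mem_insert, not_or] at hs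
      rw [rc_succ_of_mem γ hn]
      exact one_le_rc_of_notMem_skel (by omega) hs.2
    · rw [rc_succ_of_notMem γ hn]
      exact Nat.le_add_left _ _

lemma exists_gate_of_notMem_skel : ∀ {n j : ℕ}, j < n → γ j ≠ none → j ∉ skel γ n →
    ∃ i, i + 1 < n ∧ i ∉ skel γ n ∧ i + 1 ∉ skel γ n ∧ γ i = γ (i + 1) ∧
      (j = i ∨ j = i + 1)
  | 0, _, hj, _, _ => absurd hj (Nat.not_lt_zero _)
  | n + 1, j, hj, hne, hs => by
    by_cases hg : γ n ≠ none ∧ n - 1 ∈ skel γ n ∧ γ n = γ (n - 1) ∧ 1 ≤ n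
    · have hs' : skel γ (n + 1) = (skel γ n).erase (n - 1) := by
        rw [skel, if_neg hg.1, if_pos hg.2]
      have hnS : n ∉ skel γ (n + 1) :=
        fun h => self_notMem_skel γ n (Finset.mem_of_mem_erase (hs' ▸ h))
      by_cases hjn : j = n - 1 ∨ j = n
      · refine ⟨n - 1, by omega, by simp [hs'], by rwa [Nat.sub_add_cancel hg.2.2.2],
          by rw [Nat.sub_add_cancel hg.2.2.2, hg.2.2.1], by omega⟩
      · have hjS : j ∉ skel γ n := fun h => hs (hs' ▸ Finset.mem_erase.2 ⟨by omega, h⟩)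
        obtain ⟨i, hi, hiS, hi1S, heq, hji⟩ := exists_gate_of_notMem_skel (by omega) hne hjS
        exact ⟨i, by omega, notMem_skel_succ γ (by omega) hiS,
          notMem_skel_succ γ (by omega) hi1S, heq, hji⟩
    · have hsub : skel γ n ⊆ skel γ (n + 1) := by
        rw [skel]
        split_ifs with h0 hg'
        · exact subset_rfl
        · exact absurd ⟨h0, hg'⟩ hg
        · exact Finset.subset_insert _ _
      have hjn : j ≠ n := by
        rintro rfl
        by_cases h0 : γ j = none
        · exact hne h0
        · rw [skel, if_neg h0, if_neg (fun h => hg ⟨h0, h⟩)] at hs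
          exact hs (Finset.mem_insert_self _ _)
      obtain ⟨i, hi, hiS, hi1S, heq, hji⟩ :=
        exists_gate_of_notMem_skel (by omega) hne (fun h => hs (hsub h))
      exact ⟨i, by omega, notMem_skel_succ γ (by omega) hiS, notMem_skel_succ γ (by omega) hi1S,
        heq, hji⟩

end Skeleton

section NonRepetitive

variable (γ : ℕ → Option L)

lemma isNR_succ {p : ℕ} (hp : isNR γ p)
    (hnew : ∀ j < p, γ j = γ p → γ p ≠ none →
      p = j + 1 ∧ j ∉ skel γ (p + 1) ∧ p ∉ skel γ (p + 1)) :
    isNR γ (p + 1) := by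
  intro j hj j' hj' hne heq hnn
  rcases Nat.lt_succ_iff_lt_or_eq.1 hj with hjp | rfl <;>
    rcases Nat.lt_succ_iff_lt_or_eq.1 hj' with hj'p | rfl
  · obtain ⟨hadj, hjS, hj'S⟩ := hp j hjp j' hj'p hne heq hnn
    exact ⟨hadj, notMem_skel_succ γ hjp.ne hjS, notMem_skel_succ γ hj'p.ne hj'S⟩
  · obtain ⟨hadj, hjS, hpS⟩ := hnew j hjp heq (heq ▸ hnn)
    exact ⟨Or.inl hadj, hjS, hpS⟩
  · obtain ⟨hadj, hj'S, hpS⟩ := hnew j' hj'p heq.symm hnn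
    exact ⟨Or.inr hadj, hpS, hj'S⟩
  · exact absurd rfl hne

lemma isNR_succ_of_notMem {p : ℕ} (hp : isNR γ p) (h : p ∉ skel γ (p + 1)) :
    isNR γ (p + 1) := by
  refine isNR_succ γ hp fun j hj heq hne => ?_
  have hg : p - 1 ∈ skel γ p ∧ γ p = γ (p - 1) ∧ 1 ≤ p := by
    by_contra hg
    rw [skel, if_neg hne, if_neg hg] at h
    exact h (Finset.mem_insert_self _ _)
  -- `γ j = γ (p - 1)` with `p - 1` a skeleton index, which `isNR γ p` forbids unless `j = p - 1`
  obtain rfl : j = p - 1 := by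
    by_contra hj'
    exact (hp j hj (p - 1) (by omega) hj' (heq.trans hg.2.1) (heq ▸ hne)).2.2 hg.1
  rw [skel, if_neg hne, if_pos hg] at h ⊢
  exact ⟨by omega, Finset.notMem_erase _ _, h⟩

lemma exists_lt_eq_of_not_isNR_succ {p : ℕ} (hp : isNR γ p) (h : ¬isNR γ (p + 1)) :
    ∃ j < p, γ j = γ p := by
  by_contra! hno
  exact h (isNR_succ γ hp fun j hj heq _ => absurd heq (hno j hj))

lemma mem_skel_of_not_triCond {p j : ℕ} (hp : p ∈ skel γ (p + 1)) (hj : j < p)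
    (heq : γ j = γ p) (hQ : ¬triCond γ (p + 1)) :
    j ∈ skel γ (p + 1) ∧ j + 3 ≤ p + 1 := by
  have hne := ne_none_of_mem_skel γ hp
  have hjS : j ∈ skel γ (p + 1) := by
    by_contra hjS
    obtain ⟨i, hi, hiS, hi1S, hieq, hji⟩ :=
      exists_gate_of_notMem_skel γ (by omega) (heq ▸ hne) hjS
    have hip : i + 1 ≠ p := by rintro rfl; exact hi1S hp
    refine hQ ⟨i, by omega, hiS, hi1S, ?_, hieq⟩
    rcases hji with rfl | rfl
    · exact heq.symm
    · exact heq.symm.trans hieq.symm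
  refine ⟨hjS, ?_⟩
  by_contra hlt
  obtain rfl : j = p - 1 := by omega
  have hjS' : p - 1 ∈ skel γ p := by
    rw [skel_succ_of_mem γ hp] at hjS
    exact (Finset.mem_insert.1 hjS).resolve_left (by omega)
  rw [skel, if_neg hne, if_pos ⟨hjS', heq.symm, by omega⟩] at hp
  exact self_notMem_skel γ p (Finset.mem_of_mem_erase hp)

end NonRepetitive

section StoppingRule

variable (γ : ℕ → Option L) (K : ℕ)

/-- The stopping rule has not fired yet at length `n`. -/
def BeforeStop (n : ℕ) : Prop := isNR γ n ∧ rc γ n ≤ 1 ∧ kc γ n < K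

lemma exists_beforeStop_not_succ (hK : 1 ≤ K) :
    ∃ p, BeforeStop γ K p ∧ ¬BeforeStop γ K (p + 1) := by
  by_contra! h
  have hall : ∀ n, BeforeStop γ K n := by
    intro n
    induction n with
    | zero =>
      exact ⟨fun j hj => absurd hj (Nat.not_lt_zero _), by simp [rc, tc],
        by simp [kc, skel]; omega⟩
    | succ n ih => exact h n ih
  obtain ⟨-, hr, hk⟩ := hall (K + 2)
  have := le_kc_add_two_mul_rc γ (K + 2)
  omega

variable {γ K}

lemma memTag_last_of_notMem {p : ℕ} (hp : BeforeStop γ K p) (hstop : ¬BeforeStop γ K (p + 1))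
    (h : p ∉ skel γ (p + 1)) : memTag γ (p + 1) K (.last (kc γ (p + 1))) := by
  have hNR := isNR_succ_of_notMem γ hp.1 h
  have hr := rc_succ_of_notMem γ h
  have hk := kc_succ_le_of_notMem γ h
  have hr2 : rc γ (p + 1) = 2 := by
    by_contra hr2
    exact hstop ⟨hNR, by have := hp.2.1; omega, by have := hp.2.2; omega⟩
  exact ⟨by have := hp.2.2; omega, ⟨hNR, rfl, hr2⟩, by omega, h⟩

lemma exists_memTag_of_isNR {p : ℕ} (hp : BeforeStop γ K p) (hstop : ¬BeforeStop γ K (p + 1))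
    (h : p ∈ skel γ (p + 1)) (hNR : isNR γ (p + 1)) : ∃ t, memTag γ (p + 1) K t := by
  have hr := rc_succ_of_mem γ h
  have hk := kc_succ_of_mem γ h
  have hkK : kc γ (p + 1) = K := by
    by_contra hkK
    exact hstop ⟨hNR, by have := hp.2.1; omega, by have := hp.2.2; omega⟩
  rcases Nat.le_one_iff_eq_zero_or_eq_one.1 (hr ▸ hp.2.1) with hr0 | hr1
  · exact ⟨.nr0, hNR, hkK, hr0⟩
  · exact ⟨.nr1, hNR, hkK, hr1⟩

lemma exists_memTag_of_not_isNR {p : ℕ} (hp : BeforeStop γ K p) (h : p ∈ skel γ (p + 1))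
    (hNR : ¬isNR γ (p + 1)) : ∃ t, memTag γ (p + 1) K t := by
  have hr : rc γ (p + 1) ≤ 1 := (rc_succ_of_mem γ h).trans_le hp.2.1
  have hk : kc γ (p + 1) ≤ K := by have := kc_succ_of_mem γ h; have := hp.2.2; omega
  have hG : Gstar γ (p + 1) :=
    ⟨fun h' => hNR h'.1, hp.1, by rw [Nat.add_sub_cancel]; have := hp.2.1; omega⟩
  obtain ⟨j, hj, heq⟩ := exists_lt_eq_of_not_isNR_succ γ hp.1 hNR
  by_cases hQ : triCond γ (p + 1)
  · have : 1 ≤ rc γ (p + 1) := by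
      obtain ⟨i, hi, hiS, -⟩ := hQ
      exact one_le_rc_of_notMem_skel γ (by omega) hiS
    exact ⟨.tri _, hk, hG, rfl, by omega, h, hQ⟩
  obtain ⟨hjS, hj3⟩ := mem_skel_of_not_triCond γ h hj heq hQ
  have hnotTri : ¬(p + 1 - 1 ∈ skel γ (p + 1) ∧ triCond γ (p + 1)) := fun h' => hQ h'.2
  by_cases hR : recCond γ (p + 1)
  · rcases Nat.le_one_iff_eq_zero_or_eq_one.1 hr with hr0 | hr1
    · exact ⟨.rec0 _, hk, hG, rfl, hr0, hnotTri, hR⟩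
    · exact ⟨.rec1 _, hk, hG, rfl, hr1, hnotTri, hR⟩
  · -- otherwise `p - 1` would be a skeleton index strictly between `j` and `p`
    have hp1 : p - 1 ∉ skel γ (p + 1) :=
      fun h' => hR ⟨j, hjS, hj3, by simpa using heq, p - 1, h', by omega, by omega⟩
    have := one_le_rc_of_notMem_skel γ (by omega) hp1
    exact ⟨.nest _, hk, hG, rfl, by omega, hnotTri, hR, j, hjS, hj3, by simpa using heq⟩

lemma exists_memTag_succ {p : ℕ} (hp : BeforeStop γ K p) (hstop : ¬BeforeStop γ K (p + 1)) :
    ∃ t, memTag γ (p + 1) K t := by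
  by_cases h : p ∈ skel γ (p + 1)
  · by_cases hNR : isNR γ (p + 1)
    · exact exists_memTag_of_isNR hp hstop h hNR
    · exact exists_memTag_of_not_isNR hp h hNR
  · exact ⟨_, memTag_last_of_notMem hp hstop h⟩

end StoppingRule

def stopTagOf (γ : ℕ → Option L) (n : ℕ) : StopTag :=
  if isNR γ n ∧ rc γ n ≤ 2 then
    if rc γ n = 0 then .nr0 else if rc γ n = 1 then .nr1 else .last (kc γ n)
  else if n - 1 ∈ skel γ n ∧ triCond γ n then .tri (kc γ n)
  else if recCond γ n then (if rc γ n = 0 then .rec0 (kc γ n) else .rec1 (kc γ n))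
  else .nest (kc γ n)

lemma eq_stopTagOf {γ : ℕ → Option L} {n K : ℕ} {t : StopTag} (h : memTag γ n K t) :
    t = stopTagOf γ n := by
  cases t with
  | nr0 =>
    obtain ⟨hNR, -, hr⟩ := h
    simp [stopTagOf, hNR, hr]
  | nr1 =>
    obtain ⟨hNR, -, hr⟩ := h
    simp [stopTagOf, hNR, hr]
  | tri k =>
    obtain ⟨-, hG, rfl, -, hQ⟩ := h
    rw [stopTagOf, if_neg hG.1, if_pos hQ]
  | rec0 k =>
    obtain ⟨-, hG, rfl, hr, hQ, hR⟩ := h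
    rw [stopTagOf, if_neg hG.1, if_neg hQ, if_pos hR, if_pos hr]
  | rec1 k =>
    obtain ⟨-, hG, rfl, hr, hQ, hR⟩ := h
    rw [stopTagOf, if_neg hG.1, if_neg hQ, if_pos hR, if_neg (by omega)]
  | nest k =>
    obtain ⟨-, hG, rfl, -, hQ, hR, -⟩ := h
    rw [stopTagOf, if_neg hG.1, if_neg hQ, if_neg hR]
  | last k =>
    obtain ⟨-, ⟨hNR, rfl, hr⟩, -⟩ := h
    rw [stopTagOf, if_pos ⟨hNR, hr.le⟩, if_neg (by omega), if_neg (by omega)]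

theorem statement13_general {L : Type*} (K : ℕ) (hK : 1 ≤ K)
    (γ : ℕ → Option L) :
    (∃ k ≤ K, ∃ n : ℕ, k ≤ n ∧ n ≤ k + 4 ∧ (∃ t : StopTag, memTag γ n K t) ∧
      kc γ n = k) ∧
    (∀ (n K' : ℕ) (δ : ℕ → Option L) (t t' : StopTag),
      memTag δ n K' t → memTag δ n K' t' → t = t') := by
  refine ⟨?_, fun n K' δ t t' h h' => (eq_stopTagOf h).trans (eq_stopTagOf h').symm⟩
  obtain ⟨p, hp, hstop⟩ := exists_beforeStop_not_succ γ K hK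
  have hk : kc γ (p + 1) ≤ K := (kc_succ_le γ p).trans hp.2.2
  have hr : rc γ (p + 1) ≤ 2 := (rc_succ_le γ p).trans (Nat.add_le_add_right hp.2.1 1)
  have hn := le_kc_add_two_mul_rc γ (p + 1)
  exact ⟨kc γ (p + 1), hk, p + 1, kc_le γ _, by omega, exists_memTag_succ hp hstop, rfl⟩

/-- **Stopping rule.**  For every `K ≥ 1` and every infinite collision
sequence there are a unique `k ≤ K` and `n ∈ [k, k+4]` such that the length-`n`
truncation lies in the union `Γ̃(n,K)` and has exactly `k` skeleton indices;
moreover, for every fixed `n` and `K` the constituent sets of `Γ̃(n,K)` are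
pairwise disjoint. -/
theorem statement13 {L : Type*} [Countable L] (K : ℕ) (hK : 1 ≤ K)
    (γ : ℕ → Option L) :
    (∃ k ≤ K, ∃ n : ℕ, k ≤ n ∧ n ≤ k + 4 ∧ (∃ t : StopTag, memTag γ n K t) ∧
      kc γ n = k) ∧
    (∀ (n K' : ℕ) (δ : ℕ → Option L) (t t' : StopTag),
      memTag δ n K' t → memTag δ n K' t' → t = t') :=
  statement13_general K hK γ
end
end
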